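/- Let N ≥ 1, let v : {0, …, N−1} → ℝ be nonnegative, and let f = Σ_{n=0}^{N−1} v_n 1_{[n,n+1)}. Then the supremum of the autoconvolution is attained at an integer point: ‖f ∗ f‖_{L^∞(ℝ)} = max_{0 ≤ j ≤ 2N−1} (f ∗ f)(j). -/

import Mathlib

open MeasureTheory

/-- The autoconvolution of `f`: `(f ∗ f)(x) = ∫ f(t) f(x - t) dt`. -/
noncomputable def autoconv (f : ℝ → ℝ) : ℝ → ℝ := fun x => ∫ t, f t * f (x - t)

/-- The step function `f = Σ_{n=0}^{N-1} v_n 1_{[n, n+1)}`. -/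
noncomputable def stepFun (N : ℕ) (v : Fin N → ℝ) : ℝ → ℝ :=
  fun x => ∑ n : Fin N, v n * (Set.Ico ((n : ℕ) : ℝ) ((n : ℕ) + 1)).indicator 1 x

open Set

/-!
Expanding the product, `f ∗ f = Σ_{m,n} v_m v_n T(· - m - n)`, where the tent `T` (zero outside
`[0, 2]`, peak `1` at `1`) measures the overlap of `[m, m + 1)` with `x - [n, n + 1)`. So `f ∗ f`
is continuous, nonnegative, vanishes at the integers outside `[0, 2N)` and is affine between
consecutive integers; hence its supremum is its largest value at an integer of `[0, 2N)`. For a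
continuous function the essential supremum is the supremum, because `{x | c < |g x|}` is open
and nonempty open sets have positive Lebesgue measure.
-/

theorem Continuous.eLpNormEssSup_eq_iSup {α E : Type*} [TopologicalSpace α] [MeasurableSpace α]
    {μ : Measure α} [μ.IsOpenPosMeasure] [TopologicalSpace E] [ContinuousENorm E] {g : α → E}
    (hg : Continuous g) : eLpNormEssSup g μ = ⨆ x, ‖g x‖ₑ :=
  (iSup_eq_essSup fun _ _ ha =>
    (isOpen_lt continuous_const hg.enorm).measure_ne_zero μ ⟨_, ha⟩).symm

def IsAffineBetweenIntegers (g : ℝ → ℝ) : Prop :=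
  ∀ (k : ℤ) (x : ℝ), x ∈ Icc (k : ℝ) (k + 1) →
    g x = (k + 1 - x) * g k + (x - k) * g (k + 1)

namespace IsAffineBetweenIntegers

variable {g : ℝ → ℝ}

theorem const_mul (hg : IsAffineBetweenIntegers g) (c : ℝ) :
    IsAffineBetweenIntegers fun x => c * g x := by
  intro k x hx
  dsimp only
  rw [hg k x hx]
  ring

theorem sum {ι : Type*} (s : Finset ι) {g : ι → ℝ → ℝ}
    (hg : ∀ i ∈ s, IsAffineBetweenIntegers (g i)) :
    IsAffineBetweenIntegers fun x => ∑ i ∈ s, g i x := by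
  intro k x hx
  rw [Finset.mul_sum, Finset.mul_sum, ← Finset.sum_add_distrib]
  exact Finset.sum_congr rfl fun i hi => hg i hi k x hx

theorem comp_sub_intCast (hg : IsAffineBetweenIntegers g) (m : ℤ) :
    IsAffineBetweenIntegers fun x => g (x - m) := by
  intro k x hx
  have h := hg (k - m) (x - m) (by push_cast; constructor <;> linarith [hx.1, hx.2])
  push_cast at h
  dsimp only
  rw [h, sub_add_eq_add_sub]
  ring

theorem le_of_forall_intCast_le (hg : IsAffineBetweenIntegers g) {M : ℝ}
    (hM : ∀ k : ℤ, g k ≤ M) (x : ℝ) : g x ≤ M := by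
  have h₀ : (⌊x⌋ : ℝ) ≤ x := Int.floor_le x
  have h₁ : x ≤ ⌊x⌋ + 1 := (Int.lt_floor_add_one x).le
  have hk₁ := hM (⌊x⌋ + 1)
  push_cast at hk₁
  rw [hg ⌊x⌋ x ⟨h₀, h₁⟩]
  nlinarith [hM ⌊x⌋]

end IsAffineBetweenIntegers

noncomputable def tent (s : ℝ) : ℝ := max 0 (min s (2 - s))

theorem tent_nonneg (s : ℝ) : 0 ≤ tent s := le_max_left _ _

theorem tent_eq_zero_of_nonpos {s : ℝ} (h : s ≤ 0) : tent s = 0 :=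
  max_eq_left ((min_le_left _ _).trans h)

theorem tent_eq_zero_of_two_le {s : ℝ} (h : 2 ≤ s) : tent s = 0 :=
  max_eq_left ((min_le_right _ _).trans (by linarith))

@[fun_prop]
theorem continuous_tent : Continuous tent := by
  unfold tent
  fun_prop

theorem isAffineBetweenIntegers_tent : IsAffineBetweenIntegers tent := by
  intro k x ⟨hx₀, hx₁⟩
  obtain hk | rfl | rfl | hk : k ≤ -1 ∨ k = 0 ∨ k = 1 ∨ 2 ≤ k := by omega
  · have : (k : ℝ) ≤ -1 := by exact_mod_cast hk
    rw [tent_eq_zero_of_nonpos (by linarith), tent_eq_zero_of_nonpos (by linarith),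
      tent_eq_zero_of_nonpos (by linarith)]
    ring
  · push_cast at hx₀ hx₁ ⊢
    simp only [tent, min_def, max_def]
    split_ifs <;> linarith
  · push_cast at hx₀ hx₁ ⊢
    simp only [tent, min_def, max_def]
    split_ifs <;> linarith
  · have : (2 : ℝ) ≤ k := by exact_mod_cast hk
    rw [tent_eq_zero_of_two_le (by linarith), tent_eq_zero_of_two_le (by linarith),
      tent_eq_zero_of_two_le (by linarith)]
    ring

theorem volume_Ico_inter_Ioc (a b c d : ℝ) :
    volume (Ico a b ∩ Ioc c d) = ENNReal.ofReal (min b d - max a c) := by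
  refine le_antisymm ?_ ?_
  · rw [← Real.volume_Icc]
    exact measure_mono fun y ⟨⟨h₁, h₂⟩, h₃, h₄⟩ =>
      ⟨max_le h₁ h₃.le, le_min h₂.le h₄⟩
  · rw [← Real.volume_Ioo]
    refine measure_mono fun y ⟨h₁, h₂⟩ => ?_
    rw [max_lt_iff] at h₁
    rw [lt_min_iff] at h₂
    exact ⟨⟨h₁.1.le, h₂.1⟩, h₁.2, h₂.2.le⟩

theorem indicator_Ico_mul_indicator_Ico_sub (a b x t : ℝ) :
    (Ico a (a + 1)).indicator 1 t * (Ico b (b + 1)).indicator (1 : ℝ → ℝ) (x - t) =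
      (Ico a (a + 1) ∩ Ioc (x - b - 1) (x - b)).indicator 1 t := by
  have hmem : x - t ∈ Ico b (b + 1) ↔ t ∈ Ioc (x - b - 1) (x - b) := by
    simp only [mem_Ico, mem_Ioc]
    constructor <;> rintro ⟨h₁, h₂⟩ <;> constructor <;> linarith
  rw [inter_indicator_one, Pi.mul_apply]
  congr 1
  simp only [indicator_apply, hmem, Pi.one_apply]

theorem integrable_indicator_Ico_mul_indicator_Ico_sub (a b x : ℝ) :
    Integrable fun t =>
      (Ico a (a + 1)).indicator 1 t * (Ico b (b + 1)).indicator (1 : ℝ → ℝ) (x - t) := by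
  simp_rw [indicator_Ico_mul_indicator_Ico_sub]
  refine (integrable_indicator_iff (measurableSet_Ico.inter measurableSet_Ioc)).2 ?_
  refine integrableOn_const (measure_mono inter_subset_left |>.trans_lt ?_).ne
  simp

theorem integral_indicator_Ico_mul_indicator_Ico_sub (a b x : ℝ) :
    ∫ t, (Ico a (a + 1)).indicator 1 t * (Ico b (b + 1)).indicator (1 : ℝ → ℝ) (x - t) =
      tent (x - a - b) := by
  simp_rw [indicator_Ico_mul_indicator_Ico_sub]
  rw [integral_indicator_one (measurableSet_Ico.inter measurableSet_Ioc), measureReal_def,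
    volume_Ico_inter_Ioc, ENNReal.toReal_ofReal', tent, max_comm]
  congr 1
  simp only [min_def, max_def]
  split_ifs <;> linarith

theorem autoconv_stepFun_eq (N : ℕ) (v : Fin N → ℝ) :
    autoconv (stepFun N v) = fun x =>
      ∑ m : Fin N, ∑ n : Fin N, v m * v n * tent (x - ((m + n : ℕ) : ℤ)) := by
  funext x
  have hexpand : ∀ t, stepFun N v t * stepFun N v (x - t) =
      ∑ m : Fin N, ∑ n : Fin N, v m * v n *
        ((Ico ((m : ℕ) : ℝ) ((m : ℕ) + 1)).indicator 1 t *
          (Ico ((n : ℕ) : ℝ) ((n : ℕ) + 1)).indicator 1 (x - t)) := fun t => by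
    rw [stepFun, stepFun, Finset.sum_mul_sum]
    exact Finset.sum_congr rfl fun m _ => Finset.sum_congr rfl fun n _ => by ring
  simp_rw [autoconv, hexpand]
  rw [integral_finsetSum _ fun m _ => integrable_finsetSum _ fun n _ =>
    (integrable_indicator_Ico_mul_indicator_Ico_sub _ _ x).const_mul _]
  refine Finset.sum_congr rfl fun m _ => ?_
  rw [integral_finsetSum _ fun n _ =>
    (integrable_indicator_Ico_mul_indicator_Ico_sub _ _ x).const_mul _]
  refine Finset.sum_congr rfl fun n _ => ?_
  rw [integral_const_mul, integral_indicator_Ico_mul_indicator_Ico_sub]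
  push_cast
  ring_nf

theorem isAffineBetweenIntegers_autoconv_stepFun (N : ℕ) (v : Fin N → ℝ) :
    IsAffineBetweenIntegers (autoconv (stepFun N v)) := by
  rw [autoconv_stepFun_eq]
  exact .sum _ fun m _ => .sum _ fun n _ =>
    (isAffineBetweenIntegers_tent.comp_sub_intCast _).const_mul _

theorem continuous_autoconv_stepFun (N : ℕ) (v : Fin N → ℝ) :
    Continuous (autoconv (stepFun N v)) := by
  rw [autoconv_stepFun_eq]
  fun_prop

theorem autoconv_stepFun_nonneg (N : ℕ) {v : Fin N → ℝ} (hv : ∀ n, 0 ≤ v n) (x : ℝ) :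
    0 ≤ autoconv (stepFun N v) x := by
  rw [autoconv_stepFun_eq]
  exact Finset.sum_nonneg fun m _ => Finset.sum_nonneg fun n _ =>
    mul_nonneg (mul_nonneg (hv m) (hv n)) (tent_nonneg _)

theorem autoconv_stepFun_intCast_eq_zero (N : ℕ) (v : Fin N → ℝ) {k : ℤ}
    (hk : k ∉ Finset.Ico 0 (2 * N : ℤ)) : autoconv (stepFun N v) k = 0 := by
  rw [autoconv_stepFun_eq]
  refine Finset.sum_eq_zero fun m _ => Finset.sum_eq_zero fun n _ => ?_
  have hm := m.isLt
  have hn := n.isLt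
  rw [Finset.mem_Ico, not_and_or, not_le, not_lt] at hk
  have hcast : (k : ℝ) - ((m + n : ℕ) : ℤ) = ((k - (m + n : ℕ) : ℤ) : ℝ) := by push_cast; ring
  rw [hcast]
  rcases hk with hk | hk
  · rw [tent_eq_zero_of_nonpos (by exact_mod_cast (by omega : k - (m + n : ℕ) ≤ 0)), mul_zero]
  · rw [tent_eq_zero_of_two_le (by exact_mod_cast (by omega : 2 ≤ k - (m + n : ℕ))), mul_zero]

theorem autoconv_stepFun_le_sup' (N : ℕ) {v : Fin N → ℝ} (hv : ∀ n, 0 ≤ v n)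
    (hne : (Finset.range (2 * N)).Nonempty) (x : ℝ) :
    autoconv (stepFun N v) x ≤
      (Finset.range (2 * N)).sup' hne fun j => autoconv (stepFun N v) j := by
  set M := (Finset.range (2 * N)).sup' hne fun j => autoconv (stepFun N v) j
  have hN := Finset.nonempty_range_iff.1 hne
  have hM₀ : 0 ≤ M := (autoconv_stepFun_nonneg N hv ((0 : ℕ) : ℝ)).trans
    (Finset.le_sup' (fun j : ℕ => autoconv (stepFun N v) j) (Finset.mem_range.2 (by omega)))
  refine (isAffineBetweenIntegers_autoconv_stepFun N v).le_of_forall_intCast_le (fun k => ?_) x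
  by_cases hk : k ∈ Finset.Ico 0 (2 * N : ℤ)
  · rw [Finset.mem_Ico] at hk
    lift k to ℕ using hk.1
    exact Finset.le_sup' (fun j : ℕ => autoconv (stepFun N v) j)
      (Finset.mem_range.2 (by omega))
  · rw [autoconv_stepFun_intCast_eq_zero N v hk]
    exact hM₀

/-- For a nonnegative step function `f = Σ v_n 1_{[n,n+1)}`, the `L^∞` norm of
`f ∗ f` is the maximum of its values at the integers `0, 1, …, 2N - 1`. -/
theorem Linfty_norm_autoconv_stepFun (N : ℕ) (hN : 1 ≤ N) (v : Fin N → ℝ)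
    (hv : ∀ n, 0 ≤ v n) :
    eLpNorm (autoconv (stepFun N v)) ⊤ volume =
      ENNReal.ofReal
        ((Finset.range (2 * N)).sup' (Finset.nonempty_range_iff.mpr (by omega))
          (fun j => autoconv (stepFun N v) (j : ℝ))) := by
  have hne : (Finset.range (2 * N)).Nonempty := Finset.nonempty_range_iff.mpr (by omega)
  obtain ⟨j₀, -, hj₀⟩ :=
    Finset.exists_mem_eq_sup' hne fun j => autoconv (stepFun N v) (j : ℝ)
  rw [eLpNorm_exponent_top, (continuous_autoconv_stepFun N v).eLpNormEssSup_eq_iSup]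
  refine le_antisymm (iSup_le fun x => ?_) ?_
  · rw [Real.enorm_of_nonneg (autoconv_stepFun_nonneg N hv x)]
    exact ENNReal.ofReal_le_ofReal (autoconv_stepFun_le_sup' N hv hne x)
  · rw [hj₀, ← Real.enorm_of_nonneg (autoconv_stepFun_nonneg N hv _)]
    exact le_iSup (fun x => ‖autoconv (stepFun N v) x‖ₑ) _
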